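/- arXiv:0902.1131 — 2 statements merged into one kernel-verified Lean document; each statement's English description precedes it below -/
import Mathlib

section
/- Let A > 0, let v denote one of the coordinate directions x₁, x₂, u₋, let d : ℝ⁴ → ℝ be three times continuously differentiable and T, S : ℝ⁴ → ℝ continuous. Assume that d, ∂_{u₊}d, ∂_v d and ∂_{u₊}∂_v d all vanish at every point of B_ε with u₊ = 0, that |∂²_{u₊u₊}d(x)| ≤ A·(|T(x)| + |∂_{u₊}d(x)| + |d(x)|) on B_ε, and that |∂²_{u₊u₊}(∂_v d)(x)| ≤ A·(|S(x)| + |T(x)| + |∂_{u₊}∂_v d(x)| + |∂_v d(x)| + |∂_{u₊}d(x)| + |d(x)|) on B_ε. Then there exist λ₀ > 0 and C > 0, depending only on ε, μ, M, A, such that for all λ ≥ λ₀ one has ‖∂_v d‖_λ + ‖∂_{u₊}∂_v d‖_λ ≤ (C/√λ) · (‖S‖_λ + ‖T‖_λ). -/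
/-!
Along the `u₊`-segment from `{u₊ = 0}` to a point `x` of `B_ε`, the jet
`(d, ∂_{u₊} d, ∂_v d, ∂_{u₊} ∂_v d)` starts at zero and obeys a linear differential inequality
forced by `|S| + |T|`; Gronwall and Cauchy–Schwarz bound `(∂_v d)² + (∂_{u₊} ∂_v d)²` at `x` by
the integral of `S² + T²` over the segment. On `B_ε` the weight drops by at least `(u₊ - t) / 3`
between `x` and the point of the segment at height `t`, so `e^{-2λ f_ε(x)}` is dominated by
`e^{-2λ f_ε}` at that point times `e^{-(2λ/3)(u₊ - t)}`. Integrating over `B_ε` slice by slice in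
`u₊`, convolution with `e^{-(2λ/3) s}` costs a factor `3 / (2λ)`, and taking square roots gives
the gain `λ^{-1/2}`.
-/

open MeasureTheory

/-- Partial derivative of a function on ℝ⁴ in the `i`-th coordinate direction. -/
noncomputable def pd (i : Fin 4) (φ : (Fin 4 → ℝ) → ℝ) (x : Fin 4 → ℝ) : ℝ :=
  fderiv ℝ φ x (Pi.single i 1)

/-- The region `B_ε = {u₊² + u₋² + x₁² + x₂² ≤ ε²⁰, u₊ ≥ 0, u₋ ≥ 0}`, with
coordinates `x = (u₊, x₁, x₂, u₋)` indexed by `0,1,2,3`. -/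
def IKregion (ε : ℝ) : Set (Fin 4 → ℝ) :=
  {x | (x 0)^2 + (x 3)^2 + (x 1)^2 + (x 2)^2 ≤ ε^20 ∧ 0 ≤ x 0 ∧ 0 ≤ x 3}

/-- The Ionescu–Klainerman Carleman weight. -/
noncomputable def IKweight (ε : ℝ) (x : Fin 4 → ℝ) : ℝ :=
  Real.log (ε⁻¹ * (x 0 + ε) * (x 3 + ε) + ε^10 * ((x 0)^2 + (x 3)^2 + (x 1)^2 + (x 2)^2))

/-- The weighted norm `‖φ‖_λ = (∫_{B_ε} φ² e^(−2λ f_ε) ω dx)^(1/2)`. -/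
noncomputable def IKnorm (ε : ℝ) (ω : (Fin 4 → ℝ) → ℝ) (lam : ℝ)
    (φ : (Fin 4 → ℝ) → ℝ) : ℝ :=
  Real.sqrt (∫ x in IKregion ε, (φ x)^2 * Real.exp (-(2*lam) * IKweight ε x) * ω x)

open Set Real Function

theorem intervalIntegral_le_mul_exp_of_le_mul_integral_add {ρ G : ℝ → ℝ} {K b : ℝ}
    (hK : 0 ≤ K) (hb : 0 ≤ b) (hρ : Continuous ρ) (hG : Continuous G)
    (hG₀ : ∀ t ∈ Icc 0 b, 0 ≤ G t)
    (h : ∀ t ∈ Icc 0 b, ρ t ≤ K * (∫ s in 0..t, ρ s) + K * G t) :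
    ∫ s in 0..b, ρ s ≤ K * exp (K * b) * ∫ s in 0..b, G s := by
  set m : ℝ → ℝ := fun t => ∫ s in 0..t, ρ s
  set η : ℝ → ℝ := fun t => exp (-(K * t)) * m t - K * ∫ s in 0..t, G s
  have hη : ∀ t, HasDerivAt η (exp (-(K * t)) * (ρ t - K * m t) - K * G t) t := by
    intro t
    have hexp : HasDerivAt (fun t => exp (-(K * t))) (exp (-(K * t)) * -K) t := by
      simpa using ((hasDerivAt_id t).const_mul K).neg.exp
    exact ((hexp.mul (hρ.integral_hasStrictDerivAt 0 t).hasDerivAt).sub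
      ((hG.integral_hasStrictDerivAt 0 t).hasDerivAt.const_mul K)).congr_deriv
      (by simp only [m]; ring)
  have hanti : AntitoneOn η (Icc 0 b) := by
    refine antitoneOn_of_hasDerivWithinAt_nonpos (convex_Icc 0 b)
      (fun t _ => (hη t).continuousAt.continuousWithinAt) (fun t _ => (hη t).hasDerivWithinAt)
      fun t ht => ?_
    rw [interior_Icc] at ht
    have hexp_le : exp (-(K * t)) ≤ 1 := exp_le_one_iff.2 (by nlinarith [ht.1])
    have hρt : ρ t - K * m t ≤ K * G t := by linarith [h t (Ioo_subset_Icc_self ht)]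
    have hKG : 0 ≤ K * G t := mul_nonneg hK (hG₀ t (Ioo_subset_Icc_self ht))
    nlinarith [mul_le_mul_of_nonneg_left hρt (exp_pos (-(K * t))).le]
  have hmb : exp (-(K * b)) * m b ≤ K * ∫ s in 0..b, G s := by
    simpa [η, m] using hanti (left_mem_Icc.2 hb) (right_mem_Icc.2 hb) hb
  calc m b = exp (K * b) * (exp (-(K * b)) * m b) := by
        rw [← mul_assoc, ← exp_add, add_neg_cancel, exp_zero, one_mul]
    _ ≤ exp (K * b) * (K * ∫ s in 0..b, G s) := by gcongr
    _ = K * exp (K * b) * ∫ s in 0..b, G s := by ring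

theorem norm_le_mul_exp_of_norm_deriv_le {E : Type*} [NormedAddCommGroup E] [NormedSpace ℝ E]
    [CompleteSpace E] {Y Y' : ℝ → E} {G : ℝ → ℝ} {K b : ℝ} (hK : 0 ≤ K) (hb : 0 ≤ b)
    (hY : ∀ t, HasDerivAt Y (Y' t) t) (hY' : Continuous Y') (hY₀ : Y 0 = 0)
    (hG : Continuous G) (hG₀ : ∀ t ∈ Icc 0 b, 0 ≤ G t)
    (hbound : ∀ t ∈ Icc 0 b, ‖Y' t‖ ≤ K * (‖Y t‖ + G t)) :
    ‖Y b‖ ≤ K * exp (K * b) * ∫ t in 0..b, G t := by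
  have hY_le : ∀ t, 0 ≤ t → ‖Y t‖ ≤ ∫ s in 0..t, ‖Y' s‖ := fun t ht => by
    rw [← sub_zero (Y t), ← hY₀, ← intervalIntegral.integral_eq_sub_of_hasDerivAt
      (fun s _ => hY s) (hY'.intervalIntegrable 0 t)]
    exact intervalIntegral.norm_integral_le_integral_norm ht
  refine (hY_le b hb).trans <| intervalIntegral_le_mul_exp_of_le_mul_integral_add hK hb
    hY'.norm hG hG₀ fun t ht => ?_
  nlinarith [hY_le t ht.1, hbound t ht]

theorem sq_intervalIntegral_le {g : ℝ → ℝ} (hg : Continuous g) {b : ℝ} (hb : 0 ≤ b) :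
    (∫ t in 0..b, g t) ^ 2 ≤ b * ∫ t in 0..b, g t ^ 2 := by
  rcases hb.eq_or_lt with rfl | hb
  · simp
  set I := ∫ t in 0..b, g t
  -- integrate `2 c g ≤ g² + c²` with `c = I / b`
  have hint : ∫ t in 0..b, 2 * (I / b) * g t ≤ ∫ t in 0..b, (g t ^ 2 + (I / b) ^ 2) :=
    intervalIntegral.integral_mono_on hb.le ((hg.const_mul _).intervalIntegrable _ _)
      (((hg.pow 2).add continuous_const).intervalIntegrable _ _)
      fun t _ => by nlinarith [sq_nonneg (g t - I / b)]
  rw [intervalIntegral.integral_const_mul, intervalIntegral.integral_add (f := fun t => g t ^ 2)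
    ((hg.pow 2).intervalIntegrable _ _) intervalIntegrable_const,
    intervalIntegral.integral_const, smul_eq_mul, sub_zero] at hint
  have h2 : I ^ 2 / b ≤ ∫ t in 0..b, g t ^ 2 := by
    have : 2 * (I / b) * I = I ^ 2 / b + (I / b) ^ 2 * b := by field_simp; ring
    linarith
  rwa [div_le_iff₀ hb, mul_comm] at h2

theorem intervalIntegral_integral_mul_exp_le {F : ℝ → ℝ} (hF : Continuous F)
    (hF₀ : ∀ t, 0 ≤ F t) {a b : ℝ} (ha : 0 < a) (hb : 0 ≤ b) :
    ∫ u in 0..b, (∫ t in 0..u, F t * exp (-(a * (u - t)))) ≤ a⁻¹ * ∫ t in 0..b, F t := by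
  -- `Φ u = ∫₀ᵘ F t e^{-a(u-t)} dt` solves `Φ' = F - a Φ` with `Φ 0 = 0` and `Φ ≥ 0`
  set Φ : ℝ → ℝ := fun u => exp (-(a * u)) * ∫ t in 0..u, F t * exp (a * t)
  have hΦ_eq : ∀ u, ∫ t in 0..u, F t * exp (-(a * (u - t))) = Φ u := fun u => by
    simp only [Φ]
    rw [← intervalIntegral.integral_const_mul]
    congr 1 with t
    rw [show -(a * (u - t)) = -(a * u) + a * t by ring, exp_add]; ring
  have hFe : Continuous fun t => F t * exp (a * t) := by fun_prop
  have hΦ : ∀ u, HasDerivAt Φ (F u - a * Φ u) u := fun u => by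
    have hexp : HasDerivAt (fun u => exp (-(a * u))) (exp (-(a * u)) * -a) u := by
      simpa using ((hasDerivAt_id u).const_mul a).neg.exp
    have : exp (-(a * u)) * exp (a * u) = 1 := by rw [← exp_add]; simp
    exact (hexp.mul (hFe.integral_hasStrictDerivAt 0 u).hasDerivAt).congr_deriv
      (by simp only [Φ]; linear_combination (F u) * this)
  have hΦc : Continuous Φ := continuous_iff_continuousAt.2 fun u => (hΦ u).continuousAt
  have hFTC : ∫ u in 0..b, (F u - a * Φ u) = Φ b - Φ 0 :=
    intervalIntegral.integral_eq_sub_of_hasDerivAt (fun u _ => hΦ u)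
      ((hF.sub (hΦc.const_mul a)).intervalIntegrable _ _)
  have hΦb : 0 ≤ Φ b := mul_nonneg (exp_nonneg _)
    (intervalIntegral.integral_nonneg hb fun t _ => mul_nonneg (hF₀ t) (exp_nonneg _))
  rw [intervalIntegral.integral_sub (hF.intervalIntegrable _ _)
    ((hΦc.const_mul a).intervalIntegrable _ _), intervalIntegral.integral_const_mul] at hFTC
  simp only [hΦ_eq]
  rw [le_inv_mul_iff₀ ha]
  simp only [Φ, mul_zero, neg_zero, exp_zero, intervalIntegral.integral_same] at hFTC
  linarith

section Slices

variable {n : ℕ} {s : Set (Fin (n + 1) → ℝ)}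

def consSlice (s : Set (Fin (n + 1) → ℝ)) (y : Fin n → ℝ) : Set ℝ :=
  {u | (Fin.cons u y : Fin (n + 1) → ℝ) ∈ s}

theorem setIntegral_eq_integral_setIntegral_consSlice (hs : MeasurableSet s)
    {H : (Fin (n + 1) → ℝ) → ℝ} (hH : IntegrableOn H s) :
    Integrable (fun y => ∫ u in consSlice s y, H (Fin.cons u y)) ∧
      ∫ x in s, H x = ∫ y, ∫ u in consSlice s y, H (Fin.cons u y) := by
  set e := MeasurableEquiv.piFinSuccAbove (fun _ : Fin (n + 1) => ℝ) 0
  have he : MeasurePreserving e.symm (volume.prod volume) volume := by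
    rw [← Measure.volume_eq_prod]
    exact (volume_preserving_piFinSuccAbove (fun _ : Fin (n + 1) => ℝ) 0).symm e
  have he_apply : ∀ u y, e.symm (u, y) = Fin.cons u y := fun u y => Fin.insertNth_zero' u y
  have hslice : ∀ y, (fun u => s.indicator H (Fin.cons u y)) =
      (consSlice s y).indicator fun u => H (Fin.cons u y) := fun y => by
    ext u; by_cases hu : (Fin.cons u y : Fin (n + 1) → ℝ) ∈ s <;> simp [consSlice, hu]
  have hslice_meas : ∀ y, MeasurableSet (consSlice s y) := fun y =>
    hs.preimage (by fun_prop : Measurable fun u : ℝ => (Fin.cons u y : Fin (n + 1) → ℝ))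
  have hint : Integrable (s.indicator H ∘ e.symm) (volume.prod volume) :=
    (he.integrable_comp_emb e.symm.measurableEmbedding).2 ((integrable_indicator_iff hs).2 hH)
  have hfib : ∀ y, ∫ u, (s.indicator H ∘ e.symm) (u, y) = ∫ u in consSlice s y, H (Fin.cons u y) :=
    fun y => by simp only [comp_apply, he_apply, hslice y, integral_indicator (hslice_meas y)]
  refine ⟨?_, ?_⟩
  · simpa only [hfib] using hint.integral_prod_right
  · rw [← integral_indicator hs, ← he.integral_comp e.symm.measurableEmbedding]
    exact (integral_prod_symm _ hint).trans (by simp only [hfib])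

theorem setIntegral_le_of_setIntegral_consSlice_le (hs : MeasurableSet s)
    {F G : (Fin (n + 1) → ℝ) → ℝ} (hF : IntegrableOn F s) (hG : IntegrableOn G s)
    (h : ∀ y, ∫ u in consSlice s y, F (Fin.cons u y) ≤ ∫ u in consSlice s y, G (Fin.cons u y)) :
    ∫ x in s, F x ≤ ∫ x in s, G x := by
  obtain ⟨hF', hF_eq⟩ := setIntegral_eq_integral_setIntegral_consSlice hs hF
  obtain ⟨hG', hG_eq⟩ := setIntegral_eq_integral_setIntegral_consSlice hs hG
  rw [hF_eq, hG_eq]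
  exact integral_mono hF' hG' h

theorem continuous_intervalIntegral_update_mul_exp {Q : (Fin (n + 1) → ℝ) → ℝ}
    (hQ : Continuous Q) (a : ℝ) :
    Continuous fun x : Fin (n + 1) → ℝ =>
      ∫ t in 0..x 0, Q (update x 0 t) * exp (-(a * (x 0 - t))) :=
  intervalIntegral.continuous_parametric_intervalIntegral_of_continuous (by fun_prop)
    (continuous_apply 0)

theorem setIntegral_intervalIntegral_mul_exp_le (hs : IsCompact s)
    (hslice : ∀ y, ∃ b, consSlice s y = Icc 0 b) {Q : (Fin (n + 1) → ℝ) → ℝ}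
    (hQ : Continuous Q) (hQ₀ : ∀ z, 0 ≤ Q z) {a : ℝ} (ha : 0 < a) :
    ∫ x in s, (∫ t in 0..x 0, Q (update x 0 t) * exp (-(a * (x 0 - t))))
      ≤ a⁻¹ * ∫ x in s, Q x := by
  rw [← integral_const_mul]
  refine setIntegral_le_of_setIntegral_consSlice_le hs.measurableSet
    ((continuous_intervalIntegral_update_mul_exp hQ a).continuousOn.integrableOn_compact hs)
    ((hQ.const_mul _).continuousOn.integrableOn_compact hs) fun y => ?_
  obtain ⟨b, hb⟩ := hslice y
  simp only [hb, Fin.cons_zero, Fin.update_cons_zero, integral_const_mul]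
  rcases lt_or_ge b 0 with hb0 | hb0
  · simp [Icc_eq_empty_of_lt hb0]
  rw [integral_Icc_eq_integral_Ioc, integral_Icc_eq_integral_Ioc,
    ← intervalIntegral.integral_of_le hb0, ← intervalIntegral.integral_of_le hb0]
  exact intervalIntegral_integral_mul_exp_le (by fun_prop) (fun t => hQ₀ _) ha hb0

end Slices

theorem contDiff_pd {n : ℕ} {φ : (Fin 4 → ℝ) → ℝ} (hφ : ContDiff ℝ (n + 1) φ) (i : Fin 4) :
    ContDiff ℝ n (pd i φ) :=
  ((contDiff_succ_iff_fderiv.1 hφ).2.2).clm_apply contDiff_const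

theorem hasDerivAt_comp_update {φ : (Fin 4 → ℝ) → ℝ} (hφ : Differentiable ℝ φ) (i : Fin 4)
    (x : Fin 4 → ℝ) (t : ℝ) :
    HasDerivAt (fun s => φ (update x i s)) (pd i φ (update x i t)) t :=
  (hφ _).hasFDerivAt.comp_hasDerivAt t (hasDerivAt_update x i t)

noncomputable def IKweightArg (ε : ℝ) (x : Fin 4 → ℝ) : ℝ :=
  ε⁻¹ * (x 0 + ε) * (x 3 + ε) + ε^10 * ((x 0)^2 + (x 3)^2 + (x 1)^2 + (x 2)^2)

theorem IKweight_eq_log (ε : ℝ) (x : Fin 4 → ℝ) : IKweight ε x = log (IKweightArg ε x) := rfl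

noncomputable def IKweightExt (ε : ℝ) (x : Fin 4 → ℝ) : ℝ := log (max (IKweightArg ε x) ε)

namespace IKregion

variable {ε : ℝ} {x : Fin 4 → ℝ}

theorem update_zero_mem (hx : x ∈ IKregion ε) {t : ℝ} (ht : t ∈ Icc 0 (x 0)) :
    update x 0 t ∈ IKregion ε := by
  obtain ⟨h, -, h3⟩ := hx
  refine ⟨?_, ht.1, h3⟩
  simp only [update_self, update_of_ne (show (1 : Fin 4) ≠ 0 by decide),
    update_of_ne (show (2 : Fin 4) ≠ 0 by decide), update_of_ne (show (3 : Fin 4) ≠ 0 by decide)]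
  nlinarith [ht.1, ht.2]

theorem coord_le_pow (hx : x ∈ IKregion ε) : x 0 ≤ ε ^ 10 ∧ x 3 ≤ ε ^ 10 := by
  obtain ⟨h, h0, h3⟩ := hx
  have : 0 ≤ ε ^ 10 := by positivity
  constructor <;> nlinarith [sq_nonneg (x 0), sq_nonneg (x 1), sq_nonneg (x 2), sq_nonneg (x 3)]

theorem coord_zero_le_one (hε : 0 < ε) (hε1 : ε ≤ 1) (hx : x ∈ IKregion ε) : x 0 ≤ 1 :=
  (coord_le_pow hx).1.trans (pow_le_one₀ hε.le hε1)

theorem le_IKweightArg (hε : 0 < ε) (hx : x ∈ IKregion ε) : ε ≤ IKweightArg ε x := by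
  obtain ⟨-, h0, h3⟩ := hx
  have : ε⁻¹ * (x 0 + ε) * (x 3 + ε) = ε⁻¹ * (x 0 * x 3) + x 0 + x 3 + ε := by
    field_simp; ring
  unfold IKweightArg
  rw [this]
  have : 0 ≤ ε ^ 10 * ((x 0)^2 + (x 3)^2 + (x 1)^2 + (x 2)^2) := by positivity
  have : 0 ≤ ε⁻¹ * (x 0 * x 3) := by positivity
  linarith

theorem IKweightArg_le_three (hε : 0 < ε) (hε2 : ε ≤ 1/2) (hx : x ∈ IKregion ε) :
    IKweightArg ε x ≤ 3 := by
  obtain ⟨h0, h3⟩ := coord_le_pow hx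
  have hε10 : ε ^ 10 ≤ ε := pow_le_of_le_one hε.le (by linarith) (by norm_num)
  have hfirst : ε⁻¹ * (x 0 + ε) * (x 3 + ε) ≤ 4 * ε := by
    rw [mul_assoc, inv_mul_le_iff₀ hε]
    nlinarith [hx.2.1, hx.2.2]
  have hsecond : ε ^ 10 * ((x 0)^2 + (x 3)^2 + (x 1)^2 + (x 2)^2) ≤ 1 := by
    have : ε ^ 10 ≤ 1 := pow_le_one₀ hε.le (by linarith)
    have : ε ^ 20 ≤ 1 := pow_le_one₀ hε.le (by linarith)
    nlinarith [hx.1, pow_nonneg hε.le 10]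
  unfold IKweightArg
  linarith

theorem IKweightArg_update_add_le (hε : 0 < ε) (hx : x ∈ IKregion ε) {t : ℝ}
    (ht : t ∈ Icc 0 (x 0)) : IKweightArg ε (update x 0 t) + (x 0 - t) ≤ IKweightArg ε x := by
  have h3 := hx.2.2
  have hsplit : ε⁻¹ * (x 0 + ε) * (x 3 + ε)
      = ε⁻¹ * (t + ε) * (x 3 + ε) + ε⁻¹ * ((x 0 - t) * x 3) + (x 0 - t) := by
    field_simp; ring
  have : 0 ≤ ε⁻¹ * ((x 0 - t) * x 3) := mul_nonneg (inv_nonneg.2 hε.le)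
    (mul_nonneg (by linarith [ht.2]) h3)
  have : ε ^ 10 * t ^ 2 ≤ ε ^ 10 * x 0 ^ 2 := by gcongr; exacts [ht.1, ht.2]
  simp only [IKweightArg, update_self, update_of_ne (show (1 : Fin 4) ≠ 0 by decide),
    update_of_ne (show (2 : Fin 4) ≠ 0 by decide), update_of_ne (show (3 : Fin 4) ≠ 0 by decide)]
  nlinarith

theorem IKweight_update_add_le (hε : 0 < ε) (hε2 : ε ≤ 1/2) (hx : x ∈ IKregion ε) {t : ℝ}
    (ht : t ∈ Icc 0 (x 0)) : IKweight ε (update x 0 t) + (x 0 - t) / 3 ≤ IKweight ε x := by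
  have hpos_t := hε.trans_le (le_IKweightArg hε (update_zero_mem hx ht))
  have hpos := hε.trans_le (le_IKweightArg hε hx)
  have hgain := IKweightArg_update_add_le hε hx ht
  have hle3 := IKweightArg_le_three hε hε2 hx
  -- with `y`, `z` the log-arguments at `x` and on the segment:
  -- `log y - log z ≥ (y - z) / y ≥ (x₀ - t) / 3`
  have hlog := one_sub_inv_le_log_of_pos (div_pos hpos hpos_t)
  rw [log_div hpos.ne' hpos_t.ne', inv_div] at hlog
  have : (x 0 - t) / 3 ≤ 1 - IKweightArg ε (update x 0 t) / IKweightArg ε x := by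
    rw [one_sub_div hpos.ne', div_le_div_iff₀ (by norm_num) hpos]
    nlinarith [ht.2]
  rw [IKweight_eq_log, IKweight_eq_log]
  linarith

theorem isCompact (hε : 0 < ε) (hε1 : ε ≤ 1) : IsCompact (IKregion ε) := by
  have hclosed : IsClosed (IKregion ε) :=
    show IsClosed ({x : Fin 4 → ℝ | (x 0)^2 + (x 3)^2 + (x 1)^2 + (x 2)^2 ≤ ε^20} ∩
      ({x | 0 ≤ x 0} ∩ {x | 0 ≤ x 3})) from
    (isClosed_le (by fun_prop) continuous_const).inter
      ((isClosed_le continuous_const (continuous_apply 0)).inter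
        (isClosed_le continuous_const (continuous_apply 3)))
  refine Metric.isCompact_of_isClosed_isBounded hclosed
    ((Metric.isBounded_iff_subset_closedBall 0).2 ⟨1, fun x hx => ?_⟩)
  have h20 : ε ^ 20 ≤ 1 := pow_le_one₀ hε.le hε1
  obtain ⟨h, -, -⟩ := hx
  rw [Metric.mem_closedBall, dist_zero_right, pi_norm_le_iff_of_nonneg zero_le_one]
  intro i
  rw [Real.norm_eq_abs, abs_le_one_iff_mul_self_le_one]
  fin_cases i <;> simp only [Fin.zero_eta, Fin.mk_one, Fin.reduceFinMk, Fin.isValue] <;>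
    nlinarith [sq_nonneg (x 0), sq_nonneg (x 1), sq_nonneg (x 2), sq_nonneg (x 3)]

theorem exists_slice_eq_Icc (y : Fin 3 → ℝ) :
    ∃ b, consSlice (IKregion ε) y = Icc 0 b := by
  set r := (y 2)^2 + (y 0)^2 + (y 1)^2
  by_cases hy : 0 ≤ y 2 ∧ r ≤ ε ^ 20
  · refine ⟨√(ε ^ 20 - r), Set.ext fun u => ?_⟩
    change u ^ 2 + (y 2) ^ 2 + (y 0) ^ 2 + (y 1) ^ 2 ≤ ε ^ 20 ∧ 0 ≤ u ∧ 0 ≤ y 2 ↔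
      0 ≤ u ∧ u ≤ √(ε ^ 20 - r)
    constructor
    · rintro ⟨h, hu, -⟩
      exact ⟨hu, Real.le_sqrt_of_sq_le (by linarith)⟩
    · rintro ⟨hu, h⟩
      have := Real.sq_sqrt (show 0 ≤ ε ^ 20 - r by linarith [hy.2])
      exact ⟨by nlinarith [Real.sqrt_nonneg (ε ^ 20 - r)], hu, hy.1⟩
  · refine ⟨-1, Set.ext fun u => ?_⟩
    change u ^ 2 + (y 2) ^ 2 + (y 0) ^ 2 + (y 1) ^ 2 ≤ ε ^ 20 ∧ 0 ≤ u ∧ 0 ≤ y 2 ↔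
      0 ≤ u ∧ u ≤ -1
    constructor
    · rintro ⟨h, hu, h2⟩
      exact absurd ⟨h2, by nlinarith [sq_nonneg u]⟩ hy
    · rintro ⟨hu, h⟩
      linarith

end IKregion

theorem continuous_IKweightExt {ε : ℝ} (hε : 0 < ε) : Continuous (IKweightExt ε) :=
  ((by unfold IKweightArg; fun_prop : Continuous (IKweightArg ε)).max continuous_const).log
    fun x => (hε.trans_le (le_max_right _ _)).ne'

theorem IKweightExt_eq {ε : ℝ} (hε : 0 < ε) {x : Fin 4 → ℝ} (hx : x ∈ IKregion ε) :
    IKweightExt ε x = IKweight ε x := by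
  rw [IKweightExt, IKweight_eq_log, max_eq_left (IKregion.le_IKweightArg hε hx)]

section Carleman

variable {ε : ℝ}

theorem exp_IKweight_le (hε : 0 < ε) (hε2 : ε ≤ 1/2) {x : Fin 4 → ℝ} (hx : x ∈ IKregion ε)
    {t : ℝ} (ht : t ∈ Icc 0 (x 0)) {lam : ℝ} (hlam : 0 ≤ lam) :
    exp (-(2 * lam) * IKweight ε x)
      ≤ exp (-(2 * lam) * IKweight ε (update x 0 t)) * exp (-(2 * lam / 3 * (x 0 - t))) := by
  rw [← exp_add, exp_le_exp]
  nlinarith [IKregion.IKweight_update_add_le hε hε2 hx ht]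

theorem integrableOn_mul_exp_IKweight (hε : 0 < ε) (hε1 : ε ≤ 1) {P : (Fin 4 → ℝ) → ℝ}
    (hP : Continuous P) (lam : ℝ) :
    IntegrableOn (fun x => P x * exp (-(2 * lam) * IKweight ε x)) (IKregion ε) := by
  have hB := IKregion.isCompact hε hε1
  have hcont : Continuous fun x => P x * exp (-(2 * lam) * IKweightExt ε x) := by
    have := continuous_IKweightExt hε; fun_prop
  exact (hcont.continuousOn.integrableOn_compact hB).congr_fun
    (fun x hx => by simp only [IKweightExt_eq hε hx]) hB.measurableSet

theorem setIntegral_mul_exp_IKweight_le_of_le_integral (hε : 0 < ε) (hε2 : ε ≤ 1/2)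
    {P H : (Fin 4 → ℝ) → ℝ} (hP : Continuous P) (hH : Continuous H) (hH₀ : ∀ z, 0 ≤ H z)
    {c lam : ℝ} (hc : 0 ≤ c) (hlam : 0 < lam)
    (hPH : ∀ x ∈ IKregion ε, P x ≤ c * ∫ t in 0..x 0, H (update x 0 t)) :
    ∫ x in IKregion ε, P x * exp (-(2 * lam) * IKweight ε x)
      ≤ 3 * c / (2 * lam) * ∫ x in IKregion ε, H x * exp (-(2 * lam) * IKweight ε x) := by
  have hB := IKregion.isCompact hε (by linarith)
  set E : (Fin 4 → ℝ) → ℝ := fun z => exp (-(2 * lam) * IKweightExt ε z)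
  have hE : Continuous E := (continuous_const.mul (continuous_IKweightExt hε)).rexp
  have hEB : ∀ x ∈ IKregion ε, exp (-(2 * lam) * IKweight ε x) = E x := fun x hx => by
    simp only [E, IKweightExt_eq hε hx]
  set a := 2 * lam / 3
  set R : (Fin 4 → ℝ) → ℝ := fun x =>
    ∫ t in 0..x 0, H (update x 0 t) * E (update x 0 t) * exp (-(a * (x 0 - t)))
  have hpt : ∀ x ∈ IKregion ε, P x * E x ≤ c * R x := fun x hx => by
    have hγ : Continuous fun t => update x 0 t := by fun_prop
    calc P x * E x ≤ (c * ∫ t in 0..x 0, H (update x 0 t)) * E x :=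
          mul_le_mul_of_nonneg_right (hPH x hx) (exp_nonneg _)
      _ = c * ∫ t in 0..x 0, H (update x 0 t) * E x := by
          rw [intervalIntegral.integral_mul_const, mul_assoc]
      _ ≤ c * R x := by
          have hint₁ : Continuous fun t => H (update x 0 t) * E x := by fun_prop
          have hint₂ : Continuous fun t =>
              H (update x 0 t) * E (update x 0 t) * exp (-(a * (x 0 - t))) := by fun_prop
          refine mul_le_mul_of_nonneg_left (intervalIntegral.integral_mono_on hx.2.1
            (hint₁.intervalIntegrable _ _) (hint₂.intervalIntegrable _ _) fun t ht => ?_) hc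
          rw [mul_assoc, ← hEB x hx, ← hEB _ (IKregion.update_zero_mem hx ht)]
          exact mul_le_mul_of_nonneg_left (exp_IKweight_le hε hε2 hx ht hlam.le) (hH₀ _)
  have hEB_int : ∀ Φ : (Fin 4 → ℝ) → ℝ, ∫ x in IKregion ε, Φ x * exp (-(2 * lam) * IKweight ε x)
      = ∫ x in IKregion ε, Φ x * E x :=
    fun Φ => setIntegral_congr_fun hB.measurableSet fun x hx => by simp only [hEB x hx]
  rw [hEB_int, hEB_int]
  have hR : Continuous R := continuous_intervalIntegral_update_mul_exp (hH.mul hE) a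
  calc ∫ x in IKregion ε, P x * E x ≤ ∫ x in IKregion ε, c * R x :=
        setIntegral_mono_on ((hP.mul hE).continuousOn.integrableOn_compact hB)
          ((hR.const_mul c).continuousOn.integrableOn_compact hB) hB.measurableSet hpt
    _ = c * ∫ x in IKregion ε, R x := integral_const_mul c _
    _ ≤ c * (a⁻¹ * ∫ x in IKregion ε, H x * E x) := by
        gcongr
        exact setIntegral_intervalIntegral_mul_exp_le hB IKregion.exists_slice_eq_Icc
          (hH.mul hE) (fun z => mul_nonneg (hH₀ z) (exp_nonneg _)) (by positivity)
    _ = 3 * c / (2 * lam) * ∫ x in IKregion ε, H x * E x := by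
        simp only [a]; field_simp

end Carleman

theorem IKnorm_sq_mem_Icc {ε μ M lam : ℝ} (hε : 0 < ε) (hε1 : ε ≤ 1) (hμ : 0 ≤ μ)
    {ω : (Fin 4 → ℝ) → ℝ} (hω : Measurable ω) (hωb : ∀ x ∈ IKregion ε, μ ≤ ω x ∧ ω x ≤ M)
    {φ : (Fin 4 → ℝ) → ℝ} (hφ : Continuous φ) :
    IKnorm ε ω lam φ ^ 2 ∈ Icc
      (μ * ∫ x in IKregion ε, (φ x) ^ 2 * exp (-(2 * lam) * IKweight ε x))
      (M * ∫ x in IKregion ε, (φ x) ^ 2 * exp (-(2 * lam) * IKweight ε x)) := by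
  have hB := (IKregion.isCompact hε hε1).measurableSet
  have hint := integrableOn_mul_exp_IKweight (P := fun x => (φ x) ^ 2) hε hε1 (by fun_prop) lam
  have hintω : IntegrableOn
      (fun x => (φ x) ^ 2 * exp (-(2 * lam) * IKweight ε x) * ω x) (IKregion ε) :=
    hint.mul_bdd (c := M) hω.aestronglyMeasurable (ae_restrict_of_forall_mem hB
      fun x hx => by rw [norm_eq_abs, abs_le]; constructor <;> linarith [hωb x hx])
  have hnn : ∀ x ∈ IKregion ε, 0 ≤ (φ x) ^ 2 * exp (-(2 * lam) * IKweight ε x) :=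
    fun x _ => by positivity
  rw [IKnorm, sq_sqrt (setIntegral_nonneg hB fun x hx => mul_nonneg (hnn x hx)
    (hμ.trans (hωb x hx).1))]
  rw [← integral_const_mul, ← integral_const_mul]
  exact ⟨setIntegral_mono_on (hint.const_mul μ) hintω hB fun x hx => by
      rw [mul_comm]; exact mul_le_mul_of_nonneg_left (hωb x hx).1 (hnn x hx),
    setIntegral_mono_on hintω (hint.const_mul M) hB fun x hx => by
      rw [mul_comm M]; exact mul_le_mul_of_nonneg_left (hωb x hx).2 (hnn x hx)⟩

theorem integral_sq_add_sq_mul_exp_IKweight {ε lam : ℝ} (hε : 0 < ε) (hε1 : ε ≤ 1)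
    {φ ψ : (Fin 4 → ℝ) → ℝ} (hφ : Continuous φ) (hψ : Continuous ψ) :
    ∫ x in IKregion ε, ((φ x) ^ 2 + (ψ x) ^ 2) * exp (-(2 * lam) * IKweight ε x)
      = (∫ x in IKregion ε, (φ x) ^ 2 * exp (-(2 * lam) * IKweight ε x))
        + ∫ x in IKregion ε, (ψ x) ^ 2 * exp (-(2 * lam) * IKweight ε x) := by
  simp only [add_mul]
  exact integral_add
    (integrableOn_mul_exp_IKweight (P := fun x => (φ x) ^ 2) hε hε1 (by fun_prop) lam)
    (integrableOn_mul_exp_IKweight (P := fun x => (ψ x) ^ 2) hε hε1 (by fun_prop) lam)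

noncomputable def pdJet (v : Fin 4) (d : (Fin 4 → ℝ) → ℝ) : Fin 4 → (Fin 4 → ℝ) → ℝ :=
  ![d, pd 0 d, pd v d, pd 0 (pd v d)]

structure IKOdeBounds (ε A : ℝ) (v : Fin 4) (d T S : (Fin 4 → ℝ) → ℝ) : Prop where
  contDiff : ContDiff ℝ 3 d
  continuous_T : Continuous T
  continuous_S : Continuous S
  vanish : ∀ x ∈ IKregion ε, x 0 = 0 →
    d x = 0 ∧ pd 0 d x = 0 ∧ pd v d x = 0 ∧ pd 0 (pd v d) x = 0
  ode : ∀ x ∈ IKregion ε, |pd 0 (pd 0 d) x| ≤ A * (|T x| + |pd 0 d x| + |d x|)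
  ode_pd : ∀ x ∈ IKregion ε, |pd 0 (pd 0 (pd v d)) x| ≤
    A * (|S x| + |T x| + |pd 0 (pd v d) x| + |pd v d x| + |pd 0 d x| + |d x|)

namespace IKOdeBounds

variable {ε A : ℝ} {v : Fin 4} {d T S : (Fin 4 → ℝ) → ℝ}

theorem contDiff_pd_pd (h : IKOdeBounds ε A v d T S) : ContDiff ℝ 1 (pd 0 (pd v d)) :=
  contDiff_pd (contDiff_pd (n := 2) h.contDiff v) 0

theorem continuous_pd (h : IKOdeBounds ε A v d T S) : Continuous (pd v d) :=
  (contDiff_pd (n := 2) h.contDiff v).continuous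

theorem contDiff_pdJet (h : IKOdeBounds ε A v d T S) (i : Fin 4) : ContDiff ℝ 1 (pdJet v d i) := by
  fin_cases i
  · exact h.contDiff.of_le (by norm_num)
  · exact (contDiff_pd (n := 2) h.contDiff 0).of_le (by norm_num)
  · exact (contDiff_pd (n := 2) h.contDiff v).of_le (by norm_num)
  · exact h.contDiff_pd_pd

theorem pdJet_eq_zero (h : IKOdeBounds ε A v d T S) {x : Fin 4 → ℝ} (hx : x ∈ IKregion ε)
    (hx0 : x 0 = 0) : (fun i => pdJet v d i x) = 0 := by
  obtain ⟨h0, h1, h2, h3⟩ := h.vanish x hx hx0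
  ext i; fin_cases i <;> assumption

theorem norm_pd_pdJet_le (h : IKOdeBounds ε A v d T S) (hA : 0 ≤ A) {x : Fin 4 → ℝ}
    (hx : x ∈ IKregion ε) :
    ‖fun i => pd 0 (pdJet v d i) x‖ ≤
      (4 * A + 1) * (‖fun i => pdJet v d i x‖ + (|S x| + |T x|)) := by
  set N := ‖fun i => pdJet v d i x‖
  have h0 : |d x| ≤ N := norm_le_pi_norm (fun i => pdJet v d i x) 0
  have h1 : |pd 0 d x| ≤ N := norm_le_pi_norm (fun i => pdJet v d i x) 1
  have h2 : |pd v d x| ≤ N := norm_le_pi_norm (fun i => pdJet v d i x) 2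
  have h3 : |pd 0 (pd v d) x| ≤ N := norm_le_pi_norm (fun i => pdJet v d i x) 3
  have hS := abs_nonneg (S x)
  have hT := abs_nonneg (T x)
  have hN : 0 ≤ N := norm_nonneg _
  rw [pi_norm_le_iff_of_nonneg (by positivity)]
  intro i
  fin_cases i
  · change |pd 0 d x| ≤ (4 * A + 1) * (N + (|S x| + |T x|))
    nlinarith
  · change |pd 0 (pd 0 d) x| ≤ (4 * A + 1) * (N + (|S x| + |T x|))
    nlinarith [h.ode x hx]
  · change |pd 0 (pd v d) x| ≤ (4 * A + 1) * (N + (|S x| + |T x|))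
    nlinarith
  · change |pd 0 (pd 0 (pd v d)) x| ≤ (4 * A + 1) * (N + (|S x| + |T x|))
    nlinarith [h.ode_pd x hx]

theorem abs_pd_le_integral (h : IKOdeBounds ε A v d T S) (hε : 0 < ε) (hε1 : ε ≤ 1)
    (hA : 0 ≤ A) {x : Fin 4 → ℝ} (hx : x ∈ IKregion ε) :
    let B := (4 * A + 1) * exp (4 * A + 1) *
      ∫ t in 0..x 0, (|S (update x 0 t)| + |T (update x 0 t)|)
    |pd v d x| ≤ B ∧ |pd 0 (pd v d) x| ≤ B := by
  intro B
  set K := 4 * A + 1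
  set γ : ℝ → Fin 4 → ℝ := fun t => update x 0 t
  set Y : ℝ → Fin 4 → ℝ := fun t i => pdJet v d i (γ t)
  have hγ : Continuous γ := by fun_prop
  have hY : ∀ t, HasDerivAt Y (fun i => pd 0 (pdJet v d i) (γ t)) t := fun t =>
    hasDerivAt_pi.2 fun i =>
      hasDerivAt_comp_update ((h.contDiff_pdJet i).differentiable one_ne_zero) 0 x t
  have hY' : Continuous fun t i => pd 0 (pdJet v d i) (γ t) := continuous_pi fun i =>
    (contDiff_pd (n := 0) (h.contDiff_pdJet i) 0).continuous.comp hγ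
  have hY₀ : Y 0 = 0 :=
    h.pdJet_eq_zero (IKregion.update_zero_mem hx ⟨le_rfl, hx.2.1⟩) (update_self _ _ _)
  have hgron := norm_le_mul_exp_of_norm_deriv_le (by positivity) hx.2.1 hY hY' hY₀
    (by have := h.continuous_S; have := h.continuous_T; fun_prop) (fun t _ => by positivity)
    fun t ht => h.norm_pd_pdJet_le hA (IKregion.update_zero_mem hx ht)
  have hexp : exp (K * x 0) ≤ exp K := by
    rw [exp_le_exp]
    nlinarith [IKregion.coord_zero_le_one hε hε1 hx, hx.2.1]
  have hYB : ‖Y (x 0)‖ ≤ B := hgron.trans <| mul_le_mul_of_nonneg_right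
    (mul_le_mul_of_nonneg_left hexp (by positivity))
    (intervalIntegral.integral_nonneg hx.2.1 fun t _ => by positivity)
  have hYx : ∀ i, |pdJet v d i x| ≤ ‖Y (x 0)‖ := fun i => by
    simpa [Y, γ] using norm_le_pi_norm (Y (x 0)) i
  exact ⟨(hYx 2).trans hYB, (hYx 3).trans hYB⟩

theorem sq_pd_add_sq_le_integral (h : IKOdeBounds ε A v d T S) (hε : 0 < ε) (hε1 : ε ≤ 1)
    (hA : 0 ≤ A) {x : Fin 4 → ℝ} (hx : x ∈ IKregion ε) :
    (pd v d x) ^ 2 + (pd 0 (pd v d) x) ^ 2 ≤ 4 * ((4 * A + 1) * exp (4 * A + 1)) ^ 2 *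
      ∫ t in 0..x 0, ((S (update x 0 t)) ^ 2 + (T (update x 0 t)) ^ 2) := by
  set K₁ := (4 * A + 1) * exp (4 * A + 1)
  set G : ℝ → ℝ := fun t => |S (update x 0 t)| + |T (update x 0 t)|
  have hS := h.continuous_S
  have hT := h.continuous_T
  have hG : Continuous G := by fun_prop
  obtain ⟨h₁, h₂⟩ := h.abs_pd_le_integral hε hε1 hA hx
  have hJ : 0 ≤ ∫ t in 0..x 0, G t ^ 2 :=
    intervalIntegral.integral_nonneg hx.2.1 fun t _ => by positivity
  have hCS : (∫ t in 0..x 0, G t) ^ 2 ≤ ∫ t in 0..x 0, G t ^ 2 :=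
    (sq_intervalIntegral_le hG hx.2.1).trans
      (mul_le_of_le_one_left hJ (IKregion.coord_zero_le_one hε hε1 hx))
  have hG_sq : ∫ t in 0..x 0, G t ^ 2 ≤
      2 * ∫ t in 0..x 0, ((S (update x 0 t)) ^ 2 + (T (update x 0 t)) ^ 2) := by
    rw [← intervalIntegral.integral_const_mul]
    refine intervalIntegral.integral_mono_on hx.2.1 ((hG.pow 2).intervalIntegrable _ _)
      ((by fun_prop : Continuous fun t =>
        2 * ((S (update x 0 t)) ^ 2 + (T (update x 0 t)) ^ 2)).intervalIntegrable _ _)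
      fun t _ => ?_
    nlinarith [sq_abs (S (update x 0 t)), sq_abs (T (update x 0 t)),
      sq_nonneg (|S (update x 0 t)| - |T (update x 0 t)|)]
  have h₁' := pow_le_pow_left₀ (abs_nonneg _) h₁ 2
  have h₂' := pow_le_pow_left₀ (abs_nonneg _) h₂ 2
  rw [sq_abs, mul_pow] at h₁' h₂'
  have hK₁ : 0 ≤ K₁ ^ 2 := sq_nonneg _
  nlinarith [mul_le_mul_of_nonneg_left hCS hK₁, mul_le_mul_of_nonneg_left hG_sq hK₁]

theorem setIntegral_sq_pd_mul_exp_IKweight_le (h : IKOdeBounds ε A v d T S) (hε : 0 < ε)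
    (hε2 : ε ≤ 1/2) (hA : 0 ≤ A) {lam : ℝ} (hlam : 0 < lam) :
    ∫ x in IKregion ε, ((pd v d x) ^ 2 + (pd 0 (pd v d) x) ^ 2) * exp (-(2 * lam) * IKweight ε x)
      ≤ 6 * ((4 * A + 1) * exp (4 * A + 1)) ^ 2 / lam *
        ∫ x in IKregion ε, ((S x) ^ 2 + (T x) ^ 2) * exp (-(2 * lam) * IKweight ε x) := by
  have hP : Continuous fun x => (pd v d x) ^ 2 + (pd 0 (pd v d) x) ^ 2 :=
    (h.continuous_pd.pow 2).add (h.contDiff_pd_pd.continuous.pow 2)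
  have hS := h.continuous_S
  have hT := h.continuous_T
  convert setIntegral_mul_exp_IKweight_le_of_le_integral (H := fun x => (S x) ^ 2 + (T x) ^ 2)
    (c := 4 * ((4 * A + 1) * exp (4 * A + 1)) ^ 2) hε hε2 hP (by fun_prop)
    (fun z => by positivity) (by positivity) hlam
    (fun x hx => h.sq_pd_add_sq_le_integral hε (by linarith) hA hx) using 2
  field_simp
  ring

theorem IKnorm_sq_add_sq_le (h : IKOdeBounds ε A v d T S) (hε : 0 < ε) (hε2 : ε ≤ 1/2)
    (hA : 0 ≤ A) {μ M lam : ℝ} (hμ : 0 < μ) (hM : 0 ≤ M) (hlam : 0 < lam)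
    {ω : (Fin 4 → ℝ) → ℝ} (hω : Measurable ω) (hωb : ∀ x ∈ IKregion ε, μ ≤ ω x ∧ ω x ≤ M) :
    IKnorm ε ω lam (pd v d) ^ 2 + IKnorm ε ω lam (pd 0 (pd v d)) ^ 2 ≤
      M * (6 * ((4 * A + 1) * exp (4 * A + 1)) ^ 2) / μ / lam *
        (IKnorm ε ω lam S ^ 2 + IKnorm ε ω lam T ^ 2) := by
  set c := 6 * ((4 * A + 1) * exp (4 * A + 1)) ^ 2
  have hε1 : ε ≤ 1 := by linarith
  have hpdv := h.continuous_pd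
  have hpd0v := h.contDiff_pd_pd.continuous
  have hmain := h.setIntegral_sq_pd_mul_exp_IKweight_le hε hε2 hA hlam
  rw [integral_sq_add_sq_mul_exp_IKweight hε hε1 hpdv hpd0v,
    integral_sq_add_sq_mul_exp_IKweight hε hε1 h.continuous_S h.continuous_T] at hmain
  obtain ⟨-, h₁⟩ := IKnorm_sq_mem_Icc (lam := lam) hε hε1 hμ.le hω hωb hpdv
  obtain ⟨-, h₂⟩ := IKnorm_sq_mem_Icc (lam := lam) hε hε1 hμ.le hω hωb hpd0v
  obtain ⟨hS, -⟩ := IKnorm_sq_mem_Icc (lam := lam) hε hε1 hμ.le hω hωb h.continuous_S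
  obtain ⟨hT, -⟩ := IKnorm_sq_mem_Icc (lam := lam) hε hε1 hμ.le hω hωb h.continuous_T
  have hST : (∫ x in IKregion ε, (S x) ^ 2 * exp (-(2 * lam) * IKweight ε x))
      + (∫ x in IKregion ε, (T x) ^ 2 * exp (-(2 * lam) * IKweight ε x))
      ≤ (IKnorm ε ω lam S ^ 2 + IKnorm ε ω lam T ^ 2) / μ := by
    rw [le_div_iff₀ hμ]; linarith
  calc IKnorm ε ω lam (pd v d) ^ 2 + IKnorm ε ω lam (pd 0 (pd v d)) ^ 2
      ≤ M * ((∫ x in IKregion ε, (pd v d x) ^ 2 * exp (-(2 * lam) * IKweight ε x))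
        + ∫ x in IKregion ε, (pd 0 (pd v d) x) ^ 2 * exp (-(2 * lam) * IKweight ε x)) := by
        linarith
    _ ≤ M * (c / lam * ((IKnorm ε ω lam S ^ 2 + IKnorm ε ω lam T ^ 2) / μ)) := by
        gcongr
        exact hmain.trans (by gcongr)
    _ = M * c / μ / lam * (IKnorm ε ω lam S ^ 2 + IKnorm ε ω lam T ^ 2) := by
        field_simp

end IKOdeBounds

theorem add_le_two_mul_add_of_sq_add_sq_le {a b s t k : ℝ} (ha : 0 ≤ a) (hb : 0 ≤ b)
    (hs : 0 ≤ s) (ht : 0 ≤ t) (hk : 0 ≤ k) (h : a ^ 2 + b ^ 2 ≤ k ^ 2 * (s ^ 2 + t ^ 2)) :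
    a + b ≤ 2 * k * (s + t) := by
  refine (pow_le_pow_iff_left₀ (by positivity) (by positivity) two_ne_zero).1 ?_
  nlinarith [sq_nonneg (a - b), mul_nonneg hs ht, sq_nonneg k]

/-- Abstract form of the higher-order estimates (easyeqn2)–(easyeqn3) of
the paper's Lemma `easylem`. -/
theorem IK_easy_lemma_higher (ε μ M A : ℝ) (hε : 0 < ε) (hε2 : ε ≤ 1/2)
    (hμ : 0 < μ) (hμM : μ ≤ M) (hA : 0 < A) :
    ∃ lam₀ > 0, ∃ C > 0, ∀ v : Fin 4, (v = 1 ∨ v = 2 ∨ v = 3) →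
      ∀ ω : (Fin 4 → ℝ) → ℝ, Measurable ω →
      (∀ x ∈ IKregion ε, μ ≤ ω x ∧ ω x ≤ M) →
      ∀ d T S : (Fin 4 → ℝ) → ℝ, ContDiff ℝ 3 d → Continuous T → Continuous S →
        (∀ x ∈ IKregion ε, x 0 = 0 →
          d x = 0 ∧ pd 0 d x = 0 ∧ pd v d x = 0 ∧ pd 0 (pd v d) x = 0) →
        (∀ x ∈ IKregion ε,
          |pd 0 (pd 0 d) x| ≤ A * (|T x| + |pd 0 d x| + |d x|)) →
        (∀ x ∈ IKregion ε,
          |pd 0 (pd 0 (pd v d)) x| ≤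
            A * (|S x| + |T x| + |pd 0 (pd v d) x| + |pd v d x| + |pd 0 d x| + |d x|)) →
        ∀ lam : ℝ, lam₀ ≤ lam →
          IKnorm ε ω lam (pd v d) + IKnorm ε ω lam (pd 0 (pd v d))
            ≤ C / Real.sqrt lam * (IKnorm ε ω lam S + IKnorm ε ω lam T) := by
  have hM : 0 < M := hμ.trans_le hμM
  set c := 6 * ((4 * A + 1) * exp (4 * A + 1)) ^ 2
  refine ⟨1, one_pos, 2 * √(M * c / μ), by positivity, ?_⟩
  intro v _ ω hω hωb d T S hd hT hS hbc hode1 hode2 lam hlam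
  have hlam₀ : 0 < lam := one_pos.trans_le hlam
  have hsq := IKOdeBounds.IKnorm_sq_add_sq_le ⟨hd, hT, hS, hbc, hode1, hode2⟩ hε hε2 hA.le hμ
    hM.le hlam₀ hω hωb
  rw [show M * c / μ / lam = (√(M * c / μ) / √lam) ^ 2 by
    rw [div_pow, sq_sqrt (by positivity), sq_sqrt hlam₀.le]] at hsq
  calc _ ≤ 2 * (√(M * c / μ) / √lam) * (IKnorm ε ω lam S + IKnorm ε ω lam T) :=
        add_le_two_mul_add_of_sq_add_sq_le (sqrt_nonneg _) (sqrt_nonneg _) (sqrt_nonneg _)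
          (sqrt_nonneg _) (by positivity) hsq
    _ = _ := by ring
end

section
/- Write points of ℝ⁴ as x = (u₊, x₁, x₂, u₋), and let ∂₁, ∂₂ denote the partial derivatives in the x₁ and x₂ coordinates. Let α, β, A > 0, and let h : ℝ⁴ → (real symmetric 2×2 matrices) be continuously differentiable with αI ≤ h(x) ≤ βI (in the sense of quadratic forms) for all x, and with |∂₁h_{cd}(x)| ≤ A and |∂₂h_{cd}(x)| ≤ A for all x and all c, d ∈ {1,2}. Let w : ℝ⁴ → [0,∞) be continuously differentiable with ∂₁w = 0 and ∂₂w = 0 identically. Then there exists C > 0, depending only on α, β, A, such that for every three times continuously differentiable, compactly supported u : ℝ⁴ → ℝ: ∫_{ℝ⁴} Σ_{c,d,e,r=1}^{2} h_{cd}(x) h_{er}(x) ∂_c∂_e u · ∂_d∂_r u · w dx ≤ C · [ ∫_{ℝ⁴} (Σ_{c,d=1}^{2} h_{cd}(x) ∂_c∂_d u)² · w dx + ∫_{ℝ⁴} ((∂₁u)² + (∂₂u)²) · w dx ]. -/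
/-!
Integrating by parts twice in tangential directions, where the weight is constant, swaps the
middle indices of `h_cd h_er ∂_c∂_e u ∂_d∂_r u`; after the swap the integrand is the square of
the rough Laplacian `∑ h_cd ∂_c∂_d u`. The price is a commutator term in which one derivative
falls on the coefficients. By Young's inequality it is at most a small multiple of `|∂²u|²`
plus a multiple of `|∂u|²`, and `α² |∂²u|²` is at most the Hessian energy because
`h ⊗ h ≥ α²` whenever `h ≥ α`. So the commutator term is absorbed into the left-hand side.
-/

open MeasureTheory

/-- The coordinate direction of ℝ⁴ (namely `x₁` or `x₂`) corresponding to a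
tangential matrix index `i ∈ {1,2}`. -/
def dir (i : Fin 2) : Fin 4 := i.succ.castSucc

namespace Matrix

open scoped Kronecker

variable {n : Type*} [Fintype n] [DecidableEq n]

theorem PosSemidef.two_mul_abs_apply_le {M : Matrix n n ℝ} (hM : M.PosSemidef) (i j : n) :
    2 * |M i j| ≤ M i i + M j j := by
  have hsymm : M j i = M i j := by simpa using congrFun (congrFun hM.isHermitian i) j
  have quad (s : ℝ) : 0 ≤ M i i + 2 * s * M i j + s ^ 2 * M j j := by
    have := hM.dotProduct_mulVec_nonneg (Pi.single i 1 + s • Pi.single j 1)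
    simp only [dotProduct, Pi.star_apply, Pi.add_apply, Pi.single_apply, Pi.smul_apply, smul_eq_mul,
      mul_ite, mul_one, mul_zero, star_trivial, mulVec, mul_add, Finset.sum_add_distrib,
      Finset.sum_ite_eq', Finset.mem_univ, ↓reduceIte, add_mul, ite_mul, one_mul, zero_mul,
      hsymm] at this
    linarith
  rcases abs_cases (M i j) with ⟨habs, -⟩ | ⟨habs, -⟩ <;> linarith [quad 1, quad (-1)]

theorem PosSemidef.abs_apply_le {M : Matrix n n ℝ} {β : ℝ} (hM : M.PosSemidef)
    (hMβ : (β • 1 - M).PosSemidef) (i j : n) : |M i j| ≤ β := by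
  have hi := hMβ.diag_nonneg (i := i)
  have hj := hMβ.diag_nonneg (i := j)
  simp only [sub_apply, smul_apply, one_apply_eq, smul_eq_mul, mul_one, sub_nonneg] at hi hj
  linarith [hM.two_mul_abs_apply_le i j]

theorem PosSemidef.kronecker_self_sub_sq_smul_one {h : Matrix n n ℝ} {α : ℝ} (hα : 0 ≤ α)
    (hN : (h - α • 1).PosSemidef) :
    (h ⊗ₖ h - α ^ 2 • (1 : Matrix (n × n) (n × n) ℝ)).PosSemidef := by
  set N := h - α • 1
  have hh : h = N + α • 1 := by simp [N]
  have expand : h ⊗ₖ h - α ^ 2 • (1 : Matrix (n × n) (n × n) ℝ) =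
      N ⊗ₖ N + α • (N ⊗ₖ 1) + α • ((1 : Matrix n n ℝ) ⊗ₖ N) := by
    rw [hh, add_kronecker, kronecker_add, kronecker_add, smul_kronecker, kronecker_smul,
      kronecker_smul, smul_kronecker, one_kronecker_one, smul_smul, ← sq]
    abel
  rw [expand]
  exact ((hN.kronecker hN).add ((hN.kronecker .one).smul hα)).add
    ((PosSemidef.one.kronecker hN).smul hα)

theorem PosSemidef.sq_mul_sum_sq_le {h : Matrix n n ℝ} {α : ℝ} (hα : 0 ≤ α)
    (hN : (h - α • 1).PosSemidef) (D : Matrix n n ℝ) :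
    α ^ 2 * ∑ c, ∑ e, D c e ^ 2 ≤ ∑ c, ∑ d, ∑ e, ∑ r, h c d * h e r * D c e * D d r := by
  -- the right-hand side is the quadratic form of `h ⊗ₖ h` at `D`, as a vector indexed by `n × n`
  have := (hN.kronecker_self_sub_sq_smul_one hα).dotProduct_mulVec_nonneg (fun p => D p.1 p.2)
  rw [sub_mulVec, smul_mulVec, one_mulVec, dotProduct_sub, dotProduct_smul] at this
  simp only [dotProduct, mulVec, Fintype.sum_prod_type, kroneckerMap_apply, star_trivial,
    smul_eq_mul, Finset.mul_sum] at this
  calc α ^ 2 * ∑ c, ∑ e, D c e ^ 2 = ∑ c, ∑ e, α ^ 2 * (D c e * D c e) := by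
        simp only [Finset.mul_sum, sq]
    _ ≤ ∑ c, ∑ e, ∑ d, ∑ r, D c e * (h c d * h e r * D d r) := sub_nonneg.mp this
    _ = _ := Finset.sum_congr rfl fun c _ => by
        rw [Finset.sum_comm]
        exact Finset.sum_congr rfl fun _ _ => Finset.sum_congr rfl fun _ _ =>
          Finset.sum_congr rfl fun _ _ => by ring

end Matrix

theorem mul_mul_le_of_abs_le {a K M N ε : ℝ} (ha : |a| ≤ K) (hε : 0 < ε) :
    a * M * N ≤ ε * M ^ 2 + K ^ 2 / (4 * ε) * N ^ 2 := by
  have habs : a * M * N ≤ K * |M| * |N| :=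
    calc a * M * N ≤ |a * M * N| := le_abs_self _
      _ = |a| * |M| * |N| := by rw [abs_mul, abs_mul]
      _ ≤ K * |M| * |N| := by gcongr
  have hyoung : K * |M| * |N| ≤ ε * M ^ 2 + K ^ 2 / (4 * ε) * N ^ 2 := by
    rw [← sq_abs M, ← sq_abs N]
    have := sq_nonneg (2 * ε * |M| - K * |N|)
    field_simp
    nlinarith
  linarith

theorem integrable_finset_sum_and_integral_eq_zero {ι α : Type*} [MeasurableSpace α]
    {μ : Measure α} (s : Finset ι) {f : ι → α → ℝ}
    (hf : ∀ i ∈ s, Integrable (f i) μ ∧ ∫ x, f i x ∂μ = 0) :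
    Integrable (fun x => ∑ i ∈ s, f i x) μ ∧ ∫ x, ∑ i ∈ s, f i x ∂μ = 0 :=
  ⟨integrable_finsetSum s fun i hi => (hf i hi).1, by
    rw [integral_finsetSum s fun i hi => (hf i hi).1]
    exact Finset.sum_eq_zero fun i hi => (hf i hi).2⟩

section PartialDerivative

variable {f g : (Fin 4 → ℝ) → ℝ}

theorem contDiff_pd_s10 {m n : WithTop ℕ∞} (hf : ContDiff ℝ n f) (hmn : m + 1 ≤ n) (i : Fin 4) :
    ContDiff ℝ m (pd i f) :=
  (hf.fderiv_right hmn).clm_apply contDiff_const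

theorem continuous_pd (hf : ContDiff ℝ 1 f) (i : Fin 4) : Continuous (pd i f) :=
  (contDiff_pd_s10 (m := 0) hf le_rfl i).continuous

theorem continuous_pd_pd (hf : ContDiff ℝ 2 f) (i j : Fin 4) : Continuous (pd i (pd j f)) :=
  continuous_pd (contDiff_pd_s10 hf (by norm_num) j) i

theorem hasCompactSupport_pd (hf : HasCompactSupport f) (i : Fin 4) :
    HasCompactSupport (pd i f) :=
  hf.fderiv_apply ℝ _

theorem tsupport_pd_subset (i : Fin 4) : tsupport (pd i f) ⊆ tsupport f :=
  closure_minimal (fun x hx => tsupport_fderiv_subset (f := f) (𝕜 := ℝ)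
    (subset_tsupport _ fun h => hx (by simp [pd, h]))) (isClosed_tsupport f)

theorem pd_eq_zero_of_notMem_tsupport {x : Fin 4 → ℝ} (hx : x ∉ tsupport f) (i : Fin 4) :
    pd i f x = 0 :=
  image_eq_zero_of_notMem_tsupport (fun hx' => hx (tsupport_pd_subset i hx'))

theorem pd_pd_eq_zero_of_notMem_tsupport {x : Fin 4 → ℝ} (hx : x ∉ tsupport f) (i j : Fin 4) :
    pd i (pd j f) x = 0 :=
  pd_eq_zero_of_notMem_tsupport (fun hx' => hx (tsupport_pd_subset j hx')) i

theorem pd_mul {x : Fin 4 → ℝ} (hf : DifferentiableAt ℝ f x) (hg : DifferentiableAt ℝ g x)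
    (i : Fin 4) : pd i (fun y => f y * g y) x = pd i f x * g x + f x * pd i g x := by
  simp only [pd, fderiv_fun_mul hf hg, add_apply, smul_apply, smul_eq_mul]
  ring

theorem abs_pd_mul_le {x : Fin 4 → ℝ} {k : Fin 4} {A β : ℝ} (hf : DifferentiableAt ℝ f x)
    (hg : DifferentiableAt ℝ g x) (hfβ : |f x| ≤ β) (hgβ : |g x| ≤ β) (hfA : |pd k f x| ≤ A)
    (hgA : |pd k g x| ≤ A) : |pd k (fun y => f y * g y) x| ≤ 2 * A * β := by
  rw [pd_mul hf hg]
  calc |pd k f x * g x + f x * pd k g x| ≤ |pd k f x| * |g x| + |f x| * |pd k g x| := by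
        rw [← abs_mul, ← abs_mul]
        exact abs_add_le _ _
    _ ≤ A * β + β * A := add_le_add
        (mul_le_mul hfA hgβ (abs_nonneg _) ((abs_nonneg _).trans hfA))
        (mul_le_mul hfβ hgA (abs_nonneg _) ((abs_nonneg _).trans hfβ))
    _ = 2 * A * β := by ring

theorem pd_comm (hf : ContDiff ℝ 2 f) (i j : Fin 4) : pd i (pd j f) = pd j (pd i f) := by
  ext x
  have hsnd (k l : Fin 4) :
      pd k (pd l f) x = fderiv ℝ (fderiv ℝ f) x (Pi.single k 1) (Pi.single l 1) := by
    have hdiff : DifferentiableAt ℝ (fderiv ℝ f) x :=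
      (hf.fderiv_right (m := 1) le_rfl).differentiable one_ne_zero x
    change fderiv ℝ (fun y => fderiv ℝ f y (Pi.single l 1)) x (Pi.single k 1) = _
    simp [fderiv_clm_apply hdiff (differentiableAt_const _)]
  rw [hsnd, hsnd]
  exact hf.contDiffAt.isSymmSndFDerivAt (by simp) _ _

theorem integral_pd_mul_eq_zero {w : (Fin 4 → ℝ) → ℝ} {k : Fin 4} (hf : ContDiff ℝ 1 f)
    (hfc : HasCompactSupport f) (hw : Differentiable ℝ w) (hwk : ∀ x, pd k w x = 0) :
    ∫ x, pd k f x * w x = 0 := by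
  have hwk' : ∀ x, fderiv ℝ w x (Pi.single k 1) = 0 := hwk
  have hparts := integral_mul_fderiv_eq_neg_fderiv_mul_of_integrable (μ := volume)
    (f := w) (g := f) (v := Pi.single k 1) ?_ ?_ ?_ (fun x _ => hw x)
    (fun x _ => hf.differentiable one_ne_zero x)
  · simp only [hwk', zero_mul, integral_zero, neg_zero] at hparts
    simpa only [pd, mul_comm] using hparts
  · simp only [hwk', zero_mul]
    exact integrable_zero _ _ _
  · exact (hw.continuous.mul (continuous_pd hf k)).integrable_of_hasCompactSupport
      (hasCompactSupport_pd hfc k).mul_left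
  · exact (hw.continuous.mul hf.continuous).integrable_of_hasCompactSupport hfc.mul_left

/-- Pointwise form of integrating by parts in direction `j` and then in direction `i`: the last
bracket is a sum of derivatives in these directions, so it integrates to zero against a weight
that is constant in them (`integral_pd_mul_eq_zero`). -/
theorem mul_pd_pd_mul_pd_pd_swap {P u : (Fin 4 → ℝ) → ℝ} (hP : ContDiff ℝ 1 P)
    (hu : ContDiff ℝ 3 u) (i j k l : Fin 4) (x : Fin 4 → ℝ) :
    P x * pd i (pd k u) x * pd l (pd j u) x =
      P x * pd i (pd l u) x * pd k (pd j u) x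
        + (pd i P x * pd k (pd j u) x - pd j P x * pd i (pd k u) x) * pd l u x
        + (pd j (fun y => P y * pd i (pd k u) y * pd l u y) x
          - pd i (fun y => P y * pd l u y * pd k (pd j u) y) x) := by
  have hu₁ (a : Fin 4) : ContDiff ℝ 2 (pd a u) := contDiff_pd_s10 hu (by norm_num) a
  have hu₂ (a b : Fin 4) : ContDiff ℝ 1 (pd a (pd b u)) := contDiff_pd_s10 (hu₁ b) (by norm_num) a
  have hP' := hP.differentiable one_ne_zero
  have hu₁' (a : Fin 4) := (hu₁ a).differentiable two_ne_zero
  have hu₂' (a b : Fin 4) := (hu₂ a b).differentiable one_ne_zero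
  rw [pd_mul ((hP' x).fun_mul (hu₂' i k x)) (hu₁' l x), pd_mul (hP' x) (hu₂' i k x),
    pd_mul ((hP' x).fun_mul (hu₁' l x)) (hu₂' k j x), pd_mul (hP' x) (hu₁' l x),
    pd_comm (hu₁ k) j i, pd_comm (hu.of_le (by norm_num)) j k,
    pd_comm (hu.of_le (by norm_num)) j l]
  ring

end PartialDerivative

@[simp] theorem dir_zero : dir 0 = 1 := rfl

@[simp] theorem dir_one : dir 1 = 2 := rfl

section Tangential

variable (h : (Fin 4 → ℝ) → Matrix (Fin 2) (Fin 2) ℝ) (u : (Fin 4 → ℝ) → ℝ)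

noncomputable def tangentialHessianEnergy (x : Fin 4 → ℝ) : ℝ :=
  ∑ c : Fin 2, ∑ d : Fin 2, ∑ e : Fin 2, ∑ r : Fin 2,
    h x c d * h x e r * pd (dir c) (pd (dir e) u) x * pd (dir d) (pd (dir r) u) x

noncomputable def roughLaplacian (x : Fin 4 → ℝ) : ℝ :=
  ∑ c : Fin 2, ∑ d : Fin 2, h x c d * pd (dir c) (pd (dir d) u) x

noncomputable def tangentialHessianNormSq (x : Fin 4 → ℝ) : ℝ :=
  ∑ c : Fin 2, ∑ e : Fin 2, pd (dir c) (pd (dir e) u) x ^ 2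

noncomputable def tangentialGradientNormSq (x : Fin 4 → ℝ) : ℝ :=
  pd 1 u x ^ 2 + pd 2 u x ^ 2

noncomputable def commutatorTerm (x : Fin 4 → ℝ) : ℝ :=
  ∑ c : Fin 2, ∑ d : Fin 2, ∑ e : Fin 2, ∑ r : Fin 2,
    (pd (dir c) (fun y => h y c d * h y e r) x * pd (dir e) (pd (dir r) u) x
      - pd (dir r) (fun y => h y c d * h y e r) x * pd (dir c) (pd (dir e) u) x) * pd (dir d) u x

noncomputable def divergenceTerm (x : Fin 4 → ℝ) : ℝ :=
  ∑ c : Fin 2, ∑ d : Fin 2, ∑ e : Fin 2, ∑ r : Fin 2,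
    (pd (dir r) (fun y => h y c d * h y e r * pd (dir c) (pd (dir e) u) y * pd (dir d) u y) x
      - pd (dir c) (fun y => h y c d * h y e r * pd (dir d) u y * pd (dir e) (pd (dir r) u) y) x)

variable {h u} {w : (Fin 4 → ℝ) → ℝ}

theorem roughLaplacian_sq (x : Fin 4 → ℝ) :
    roughLaplacian h u x ^ 2 = ∑ c : Fin 2, ∑ d : Fin 2, ∑ e : Fin 2, ∑ r : Fin 2,
      h x c d * h x e r * pd (dir c) (pd (dir d) u) x * pd (dir e) (pd (dir r) u) x := by
  simp only [roughLaplacian, sq, Finset.sum_mul]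
  simp only [Finset.mul_sum]
  exact Finset.sum_congr rfl fun _ _ => Finset.sum_congr rfl fun _ _ =>
    Finset.sum_congr rfl fun _ _ => Finset.sum_congr rfl fun _ _ => by ring

theorem tangentialHessianEnergy_eq (hh : ∀ c d, ContDiff ℝ 1 fun y => h y c d)
    (hu : ContDiff ℝ 3 u) (x : Fin 4 → ℝ) :
    tangentialHessianEnergy h u x =
      roughLaplacian h u x ^ 2 + commutatorTerm h u x + divergenceTerm h u x := by
  simp only [tangentialHessianEnergy, roughLaplacian_sq, commutatorTerm, divergenceTerm,
    ← Finset.sum_add_distrib]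
  exact Finset.sum_congr rfl fun c _ => Finset.sum_congr rfl fun d _ =>
    Finset.sum_congr rfl fun e _ => Finset.sum_congr rfl fun r _ =>
      mul_pd_pd_mul_pd_pd_swap ((hh c d).mul (hh e r)) hu (dir c) (dir r) (dir e) (dir d) x

theorem commutatorTerm_le {K ε : ℝ} {x : Fin 4 → ℝ} (hε : 0 < ε)
    (hK : ∀ k c d e r : Fin 2, |pd (dir k) (fun y => h y c d * h y e r) x| ≤ K) :
    commutatorTerm h u x ≤
      8 * ε * tangentialHessianNormSq u x + 4 * K ^ 2 / ε * tangentialGradientNormSq u x := by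
  calc commutatorTerm h u x
      ≤ ∑ c : Fin 2, ∑ d : Fin 2, ∑ e : Fin 2, ∑ r : Fin 2,
          (ε * pd (dir e) (pd (dir r) u) x ^ 2 + ε * pd (dir c) (pd (dir e) u) x ^ 2
            + 2 * (K ^ 2 / (4 * ε)) * pd (dir d) u x ^ 2) := by
        refine Finset.sum_le_sum fun c _ => Finset.sum_le_sum fun d _ =>
          Finset.sum_le_sum fun e _ => Finset.sum_le_sum fun r _ => ?_
        have h₁ := mul_mul_le_of_abs_le (hK c c d e r) hε (M := pd (dir e) (pd (dir r) u) x)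
          (N := pd (dir d) u x)
        have h₂ := mul_mul_le_of_abs_le ((abs_neg _).trans_le (hK r c d e r)) hε
          (M := pd (dir c) (pd (dir e) u) x) (N := pd (dir d) u x)
        linarith
    _ = _ := by
        simp only [tangentialHessianNormSq, tangentialGradientNormSq, Fin.sum_univ_two, dir_zero,
          dir_one]
        field_simp
        ring

theorem tangentialHessianEnergy_le {α K : ℝ} {x : Fin 4 → ℝ} (hα : 0 < α)
    (hh : ∀ c d, ContDiff ℝ 1 fun y => h y c d) (hhα : (h x - α • 1).PosSemidef)
    (hK : ∀ k c d e r : Fin 2, |pd (dir k) (fun y => h y c d * h y e r) x| ≤ K)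
    (hu : ContDiff ℝ 3 u) :
    tangentialHessianEnergy h u x ≤ 2 * roughLaplacian h u x ^ 2
      + 128 * K ^ 2 / α ^ 2 * tangentialGradientNormSq u x + 2 * divergenceTerm h u x := by
  have hcoercive : α ^ 2 * tangentialHessianNormSq u x ≤ tangentialHessianEnergy h u x :=
    hhα.sq_mul_sum_sq_le hα.le (Matrix.of fun c e => pd (dir c) (pd (dir e) u) x)
  have hcomm := commutatorTerm_le (u := u) (ε := α ^ 2 / 16) (by positivity) hK
  rw [show 4 * K ^ 2 / (α ^ 2 / 16) = 64 * K ^ 2 / α ^ 2 by field_simp; ring] at hcomm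
  rw [show 128 * K ^ 2 / α ^ 2 = 2 * (64 * K ^ 2 / α ^ 2) by ring]
  linarith [tangentialHessianEnergy_eq hh hu x]

theorem integral_divergenceTerm_mul_eq_zero (hh : ∀ c d, ContDiff ℝ 1 fun y => h y c d)
    (hu : ContDiff ℝ 3 u) (hucs : HasCompactSupport u) (hw : Differentiable ℝ w)
    (hw₁ : ∀ x, pd 1 w x = 0) (hw₂ : ∀ x, pd 2 w x = 0) :
    Integrable (fun x => divergenceTerm h u x * w x) ∧ ∫ x, divergenceTerm h u x * w x = 0 := by
  have hw_dir : ∀ k x, pd (dir k) w x = 0 := by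
    intro k
    fin_cases k
    exacts [hw₁, hw₂]
  have hdiv {f : (Fin 4 → ℝ) → ℝ} (hf : ContDiff ℝ 1 f) (hfc : HasCompactSupport f)
      (k : Fin 2) : Integrable (fun x => pd (dir k) f x * w x) ∧ ∫ x, pd (dir k) f x * w x = 0 :=
    ⟨((continuous_pd hf _).mul hw.continuous).integrable_of_hasCompactSupport
      (hasCompactSupport_pd hfc _).mul_right, integral_pd_mul_eq_zero hf hfc hw (hw_dir k)⟩
  have hu₁ (a : Fin 4) : ContDiff ℝ 1 (pd a u) := contDiff_pd_s10 hu (by norm_num) a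
  have hu₂ (a b : Fin 4) : ContDiff ℝ 1 (pd a (pd b u)) :=
    contDiff_pd_s10 (contDiff_pd_s10 hu (m := 2) (by norm_num) b) (by norm_num) a
  simp only [divergenceTerm, Finset.sum_mul, sub_mul]
  refine integrable_finset_sum_and_integral_eq_zero _ fun c _ =>
    integrable_finset_sum_and_integral_eq_zero _ fun d _ =>
      integrable_finset_sum_and_integral_eq_zero _ fun e _ =>
        integrable_finset_sum_and_integral_eq_zero _ fun r _ => ?_
  have hP := (hh c d).mul (hh e r)
  obtain ⟨hi₁, hz₁⟩ := hdiv ((hP.mul (hu₂ _ _)).mul (hu₁ _))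
    (hasCompactSupport_pd hucs _).mul_left r
  obtain ⟨hi₂, hz₂⟩ := hdiv ((hP.mul (hu₁ _)).mul (hu₂ _ _))
    (hasCompactSupport_pd (hasCompactSupport_pd hucs _) _).mul_left c
  exact ⟨hi₁.sub hi₂, by rw [integral_sub hi₁ hi₂, hz₁, hz₂, sub_zero]⟩

theorem integrable_mul_of_eq_zero_of_notMem_tsupport {F : (Fin 4 → ℝ) → ℝ}
    (hucs : HasCompactSupport u) (hF : Continuous F) (hw : Continuous w)
    (hF₀ : ∀ x ∉ tsupport u, F x = 0) : Integrable fun x => F x * w x :=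
  (hF.mul hw).integrable_of_hasCompactSupport (HasCompactSupport.intro hucs hF₀).mul_right

theorem integrable_tangentialHessianEnergy_mul (hh : ∀ c d, Continuous fun y => h y c d)
    (hu : ContDiff ℝ 2 u) (hucs : HasCompactSupport u) (hw : Continuous w) :
    Integrable fun x => tangentialHessianEnergy h u x * w x := by
  have hu₂ := continuous_pd_pd hu
  refine integrable_mul_of_eq_zero_of_notMem_tsupport hucs
    (by unfold tangentialHessianEnergy; fun_prop) hw fun x hx => ?_
  simp [tangentialHessianEnergy, pd_pd_eq_zero_of_notMem_tsupport hx]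

theorem integrable_roughLaplacian_sq_mul (hh : ∀ c d, Continuous fun y => h y c d)
    (hu : ContDiff ℝ 2 u) (hucs : HasCompactSupport u) (hw : Continuous w) :
    Integrable fun x => roughLaplacian h u x ^ 2 * w x := by
  have hu₂ := continuous_pd_pd hu
  refine integrable_mul_of_eq_zero_of_notMem_tsupport hucs
    (by unfold roughLaplacian; fun_prop) hw fun x hx => ?_
  simp [roughLaplacian, pd_pd_eq_zero_of_notMem_tsupport hx]

theorem integrable_tangentialGradientNormSq_mul (hu : ContDiff ℝ 1 u)
    (hucs : HasCompactSupport u) (hw : Continuous w) :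
    Integrable fun x => tangentialGradientNormSq u x * w x := by
  have hu₁ := continuous_pd hu
  refine integrable_mul_of_eq_zero_of_notMem_tsupport hucs
    (by unfold tangentialGradientNormSq; fun_prop) hw fun x hx => ?_
  simp [tangentialGradientNormSq, pd_eq_zero_of_notMem_tsupport hx]

theorem integral_tangentialHessianEnergy_mul_le {α K : ℝ} (hα : 0 < α)
    (hh : ∀ c d, ContDiff ℝ 1 fun y => h y c d) (hhα : ∀ x, (h x - α • 1).PosSemidef)
    (hK : ∀ x, ∀ k c d e r : Fin 2, |pd (dir k) (fun y => h y c d * h y e r) x| ≤ K)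
    (hw : ContDiff ℝ 1 w) (hw₀ : ∀ x, 0 ≤ w x) (hw₁ : ∀ x, pd 1 w x = 0)
    (hw₂ : ∀ x, pd 2 w x = 0) (hu : ContDiff ℝ 3 u) (hucs : HasCompactSupport u) :
    ∫ x, tangentialHessianEnergy h u x * w x ≤ 2 * (∫ x, roughLaplacian h u x ^ 2 * w x)
      + 128 * K ^ 2 / α ^ 2 * ∫ x, tangentialGradientNormSq u x * w x := by
  obtain ⟨hRint, hR⟩ := integral_divergenceTerm_mul_eq_zero hh hu hucs
    (hw.differentiable one_ne_zero) hw₁ hw₂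
  have hhc (c d : Fin 2) := (hh c d).continuous
  have hu₂ : ContDiff ℝ 2 u := hu.of_le (by norm_num)
  have hLint := (integrable_roughLaplacian_sq_mul hhc hu₂ hucs hw.continuous).const_mul 2
  have hGint := (integrable_tangentialGradientNormSq_mul (hu₂.of_le one_le_two) hucs
    hw.continuous).const_mul (128 * K ^ 2 / α ^ 2)
  calc ∫ x, tangentialHessianEnergy h u x * w x
      ≤ ∫ x, 2 * (roughLaplacian h u x ^ 2 * w x)
          + 128 * K ^ 2 / α ^ 2 * (tangentialGradientNormSq u x * w x)
          + 2 * (divergenceTerm h u x * w x) :=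
        integral_mono (integrable_tangentialHessianEnergy_mul hhc hu₂ hucs hw.continuous)
          ((hLint.add hGint).add (hRint.const_mul 2)) fun x => by
            have := mul_le_mul_of_nonneg_right
              (tangentialHessianEnergy_le hα hh (hhα x) (hK x) hu) (hw₀ x)
            linarith
    _ = _ := by
        rw [integral_add _ (hRint.const_mul 2), integral_add hLint hGint, integral_const_mul,
          integral_const_mul, integral_const_mul, hR, mul_zero, add_zero]
        exact hLint.add hGint

end Tangential

theorem weighted_elliptic_estimate_general (α β A : ℝ) (hα : 0 < α) :
    ∃ C > 0,
      ∀ h : (Fin 4 → ℝ) → Matrix (Fin 2) (Fin 2) ℝ,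
        (∀ c d : Fin 2, ContDiff ℝ 1 (fun x => h x c d)) →
        (∀ x, (h x).IsSymm) →
        (∀ x, (h x - α • (1 : Matrix (Fin 2) (Fin 2) ℝ)).PosSemidef) →
        (∀ x, ((β • (1 : Matrix (Fin 2) (Fin 2) ℝ)) - h x).PosSemidef) →
        (∀ x, ∀ c d : Fin 2,
          |pd 1 (fun y => h y c d) x| ≤ A ∧ |pd 2 (fun y => h y c d) x| ≤ A) →
      ∀ w : (Fin 4 → ℝ) → ℝ, ContDiff ℝ 1 w → (∀ x, 0 ≤ w x) →
        (∀ x, pd 1 w x = 0) → (∀ x, pd 2 w x = 0) →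
      ∀ u : (Fin 4 → ℝ) → ℝ, ContDiff ℝ 3 u → HasCompactSupport u →
        ∫ x, (∑ c : Fin 2, ∑ d : Fin 2, ∑ e : Fin 2, ∑ r : Fin 2,
            h x c d * h x e r * pd (dir c) (pd (dir e) u) x
              * pd (dir d) (pd (dir r) u) x) * w x
          ≤ C * ((∫ x, (∑ c : Fin 2, ∑ d : Fin 2,
                h x c d * pd (dir c) (pd (dir d) u) x)^2 * w x)
             + ∫ x, ((pd 1 u x)^2 + (pd 2 u x)^2) * w x) := by
  set c₀ := 128 * (2 * A * β) ^ 2 / α ^ 2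
  have hc₀ : 0 ≤ c₀ := by positivity
  refine ⟨2 + c₀, by positivity, ?_⟩
  intro h hh _ hhα hhβ hhA w hw hw₀ hw₁ hw₂ u hu hucs
  have hpsd (x) : (h x).PosSemidef := by
    simpa using (hhα x).add (Matrix.PosSemidef.one.smul hα.le)
  have hA (x) (k c d : Fin 2) : |pd (dir k) (fun y => h y c d) x| ≤ A := by
    fin_cases k
    exacts [(hhA x c d).1, (hhA x c d).2]
  have hK (x) (k c d e r : Fin 2) : |pd (dir k) (fun y => h y c d * h y e r) x| ≤ 2 * A * β :=
    abs_pd_mul_le ((hh c d).differentiable one_ne_zero x) ((hh e r).differentiable one_ne_zero x)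
      ((hpsd x).abs_apply_le (hhβ x) c d) ((hpsd x).abs_apply_le (hhβ x) e r) (hA x k c d)
      (hA x k e r)
  have hL₀ : 0 ≤ ∫ x, roughLaplacian h u x ^ 2 * w x :=
    integral_nonneg fun x => mul_nonneg (sq_nonneg _) (hw₀ x)
  have hG₀ : 0 ≤ ∫ x, tangentialGradientNormSq u x * w x :=
    integral_nonneg fun x => mul_nonneg (by unfold tangentialGradientNormSq; positivity) (hw₀ x)
  calc _ ≤ 2 * (∫ x, roughLaplacian h u x ^ 2 * w x)
          + c₀ * ∫ x, tangentialGradientNormSq u x * w x :=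
        integral_tangentialHessianEnergy_mul_le hα hh hhα hK hw hw₀ hw₁ hw₂ hu hucs
    _ ≤ (2 + c₀) * ((∫ x, roughLaplacian h u x ^ 2 * w x)
          + ∫ x, tangentialGradientNormSq u x * w x) := by nlinarith [mul_nonneg hc₀ hL₀]

/-- Abstract variable-coefficient form of the paper's weighted elliptic estimate on
the level sets of the Carleman weight (the passage from (karaman1) to (prfstim2)). -/
theorem weighted_elliptic_estimate (α β A : ℝ) (hα : 0 < α) (hβ : 0 < β) (hA : 0 < A) :
    ∃ C > 0,
      ∀ h : (Fin 4 → ℝ) → Matrix (Fin 2) (Fin 2) ℝ,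
        (∀ c d : Fin 2, ContDiff ℝ 1 (fun x => h x c d)) →
        (∀ x, (h x).IsSymm) →
        (∀ x, (h x - α • (1 : Matrix (Fin 2) (Fin 2) ℝ)).PosSemidef) →
        (∀ x, ((β • (1 : Matrix (Fin 2) (Fin 2) ℝ)) - h x).PosSemidef) →
        (∀ x, ∀ c d : Fin 2,
          |pd 1 (fun y => h y c d) x| ≤ A ∧ |pd 2 (fun y => h y c d) x| ≤ A) →
      ∀ w : (Fin 4 → ℝ) → ℝ, ContDiff ℝ 1 w → (∀ x, 0 ≤ w x) →
        (∀ x, pd 1 w x = 0) → (∀ x, pd 2 w x = 0) →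
      ∀ u : (Fin 4 → ℝ) → ℝ, ContDiff ℝ 3 u → HasCompactSupport u →
        ∫ x, (∑ c : Fin 2, ∑ d : Fin 2, ∑ e : Fin 2, ∑ r : Fin 2,
            h x c d * h x e r * pd (dir c) (pd (dir e) u) x
              * pd (dir d) (pd (dir r) u) x) * w x
          ≤ C * ((∫ x, (∑ c : Fin 2, ∑ d : Fin 2,
                h x c d * pd (dir c) (pd (dir d) u) x)^2 * w x)
             + ∫ x, ((pd 1 u x)^2 + (pd 2 u x)^2) * w x) :=
  weighted_elliptic_estimate_general α β A hα
end
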